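/- Let N ≥ 1, 1 < p < ∞, 0 < s < 1, let Ω ⊂ ℝ^N be a bounded open set with Lipschitz boundary, and let u ∈ W_0^{s+log,p}(Ω). Then for every 0 < r < 1 one has [u]_{s,p}^p = ∬_{ℝ^{2N}} |u(x)−u(y)|^p / |x−y|^{N+sp} dx dy ≤ −(1/(C(N,s,p)·ln r))·[u]_{s+log,p}^p + (2^p·ω_N/(sp))·r^{−sp}·‖u‖_{L^p(Ω)}^p. -/

import Mathlib

open MeasureTheory Filter Set
open scoped ENNReal NNReal

noncomputable section

abbrev Rn (N : ℕ) := EuclideanSpace ℝ (Fin N)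

/-- The normalization constant `C(N,s,p)` of the fractional `p`-Laplacian. -/
def Cns (N : ℕ) (s p : ℝ) : ℝ :=
  if 1/2 < s then
    s * p * (2:ℝ) ^ (2*(s-1)) * Real.Gamma (((N:ℝ) + s*p)/2) /
      (Real.pi ^ (((N:ℝ) - 1)/2) * Real.Gamma (1-s) * Real.Gamma ((p+1)/2))
  else
    s * p * (2:ℝ) ^ (2*s-1) * Real.Gamma (((N:ℝ) + s*p)/2) /
      (Real.pi ^ ((N:ℝ)/2) * Real.Gamma (1-s))

/-- The digamma function `ψ = Γ'/Γ = (log Γ)'`. -/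
def digamma (x : ℝ) : ℝ := deriv (fun t => Real.log (Real.Gamma t)) x

/-- The constant `B(N,s,p) = d/dt (ln C(N,t,p))|_{t=s}`. -/
def Bns (N : ℕ) (s p : ℝ) : ℝ :=
  2 * Real.log 2 + 1/s + (p/2) * digamma (((N:ℝ) + s*p)/2) + digamma (1-s)

/-- Principal value integral over `ℝ^N` centered at `x`. -/
def pv (N : ℕ) (x : Rn N) (f : Rn N → ℝ) : ℝ :=
  limUnder (nhdsWithin (0:ℝ) (Set.Ioi 0))
    (fun ε : ℝ => ∫ y in {y : Rn N | ε ≤ dist y x}, f y)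

/-- The fractional `p`-Laplacian `(-Δ)_p^t u (x)`. -/
def fracPLap (N : ℕ) (t p : ℝ) (u : Rn N → ℝ) (x : Rn N) : ℝ :=
  Cns N t p * pv N x (fun y =>
    |u x - u y| ^ (p - 2) * (u x - u y) / dist x y ^ ((N:ℝ) + t*p))

/-- The fractional logarithmic `p`-Laplacian `(-Δ)_p^{s+log} u (x)`. -/
def fracLogPLap (N : ℕ) (s p : ℝ) (u : Rn N → ℝ) (x : Rn N) : ℝ :=
  Bns N s p * fracPLap N s p u x -
    p * Cns N s p * pv N x (fun y =>
      |u x - u y| ^ (p - 2) * (u x - u y) * Real.log (dist x y) / dist x y ^ ((N:ℝ) + s*p))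

/-- Positive part of the logarithmic kernel. -/
def kplus (N : ℕ) (s p : ℝ) (z : Rn N) : ℝ :=
  Cns N s p * max (-Real.log ‖z‖) 0 / ‖z‖ ^ ((N:ℝ) + s*p)

/-- Negative part of the logarithmic kernel. -/
def kminus (N : ℕ) (s p : ℝ) (z : Rn N) : ℝ :=
  Cns N s p * max (Real.log ‖z‖) 0 / ‖z‖ ^ ((N:ℝ) + s*p)

/-- `[u]_{s+log,p}^p`, the `p`-th power of the fractional logarithmic Gagliardo seminorm. -/
def gagLogP (N : ℕ) (s p : ℝ) (u : Rn N → ℝ) : ℝ≥0∞ :=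
  ∫⁻ z : Rn N × Rn N, ENNReal.ofReal (|u z.1 - u z.2| ^ p * kplus N s p (z.1 - z.2))

/-- `[u]_{t,p}^p`, the `p`-th power of the fractional Gagliardo seminorm. -/
def gagP (N : ℕ) (t p : ℝ) (u : Rn N → ℝ) : ℝ≥0∞ :=
  ∫⁻ z : Rn N × Rn N, ENNReal.ofReal (|u z.1 - u z.2| ^ p / ‖z.1 - z.2‖ ^ ((N:ℝ) + t*p))

/-- Membership in `W^{s+log,p}(ℝ^N)`. -/
def memW (N : ℕ) (s p : ℝ) (u : Rn N → ℝ) : Prop :=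
  MemLp u (ENNReal.ofReal p) (volume : Measure (Rn N)) ∧ gagLogP N s p u < ⊤

/-- Membership in `W_0^{s+log,p}(Ω)`. -/
def memW0 (N : ℕ) (s p : ℝ) (Ω : Set (Rn N)) (u : Rn N → ℝ) : Prop :=
  memW N s p u ∧ ∀ᵐ x : Rn N, x ∉ Ω → u x = 0

/-- Surface measure of the unit sphere in `ℝ^N`. -/
def omegaN (N : ℕ) : ℝ := 2 * Real.pi ^ ((N:ℝ)/2) / Real.Gamma ((N:ℝ)/2)

/-- The form `J_+`. -/
def Jplus (N : ℕ) (s p : ℝ) (u v : Rn N → ℝ) : ℝ :=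
  ∫ z : Rn N × Rn N,
    |u z.1 - u z.2| ^ (p-2) * (u z.1 - u z.2) * (v z.1 - v z.2) * kplus N s p (z.1 - z.2)

/-- The form `J_-`. -/
def Jminus (N : ℕ) (s p : ℝ) (u v : Rn N → ℝ) : ℝ :=
  ∫ z : Rn N × Rn N,
    |u z.1 - u z.2| ^ (p-2) * (u z.1 - u z.2) * (v z.1 - v z.2) * kminus N s p (z.1 - z.2)

/-- The form `J_s`. -/
def Js (N : ℕ) (s p : ℝ) (u v : Rn N → ℝ) : ℝ :=
  ∫ z : Rn N × Rn N,
    |u z.1 - u z.2| ^ (p-2) * (u z.1 - u z.2) * (v z.1 - v z.2) / ‖z.1 - z.2‖ ^ ((N:ℝ) + s*p)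

/-- The full energy form `J_{s+log,p}`. -/
def Jlog (N : ℕ) (s p : ℝ) (u v : Rn N → ℝ) : ℝ :=
  p/2 * (Jplus N s p u v - Jminus N s p u v) + Bns N s p * Cns N s p / 2 * Js N s p u v

/-- `Ω` has a Lipschitz boundary: near each boundary point, in some direction `v`,
`Ω` is the subgraph of a Lipschitz function on the hyperplane orthogonal to `v`. -/
def HasLipschitzBoundary {N : ℕ} (Ω : Set (Rn N)) : Prop :=
  ∀ x ∈ frontier Ω, ∃ r : ℝ, 0 < r ∧
    ∃ (v : Rn N) (L : NNReal) (φ : Rn N → ℝ), ‖v‖ = 1 ∧ LipschitzWith L φ ∧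
      ∀ y ∈ Metric.ball x r,
        (y ∈ Ω ↔ (inner ℝ y v : ℝ) < φ (y - (inner ℝ y v : ℝ) • v))



section Helpers

open Metric

lemma lintegral_fun_norm_polar {E : Type*} [NormedAddCommGroup E] [NormedSpace ℝ E]
    [MeasurableSpace E] [BorelSpace E] [FiniteDimensional ℝ E] [Nontrivial E]
    (μ : Measure E) [μ.IsAddHaarMeasure] (f : ℝ → ℝ≥0∞) (hf : Measurable f) :
    ∫⁻ x, f ‖x‖ ∂μ = μ.toSphere Set.univ *
      ∫⁻ y in Set.Ioi (0:ℝ), ENNReal.ofReal (y ^ (Module.finrank ℝ E - 1)) * f y := by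
  have h1 : ∫⁻ x, f ‖x‖ ∂μ
      = ∫⁻ x : ({0}ᶜ : Set E), f ‖(x : E)‖ ∂(μ.comap Subtype.val) := by
    rw [lintegral_subtype_comap (measurableSet_singleton (0:E)).compl fun x => f ‖x‖,
      restrict_compl_singleton]
  have h2 := (μ.measurePreserving_homeomorphUnitSphereProd).lintegral_comp
    (f := fun z : (Metric.sphere (0:E) 1) × (Set.Ioi (0:ℝ)) => f z.2)
    (hf.comp (measurable_subtype_coe.comp measurable_snd))
  have h3 : ∫⁻ z : (Metric.sphere (0:E) 1) × (Set.Ioi (0:ℝ)), f z.2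
        ∂(μ.toSphere.prod (.volumeIoiPow (Module.finrank ℝ E - 1)))
      = μ.toSphere Set.univ * ∫⁻ y : Set.Ioi (0:ℝ), f y
          ∂(Measure.volumeIoiPow (Module.finrank ℝ E - 1)) := by
    rw [lintegral_prod (fun z : (Metric.sphere (0:E) 1) × (Set.Ioi (0:ℝ)) => f ↑z.2)
      (((hf.comp (measurable_subtype_coe.comp measurable_snd)) :
        Measurable fun z : (Metric.sphere (0:E) 1) × (Set.Ioi (0:ℝ)) => f ↑z.2).aemeasurable)]
    simp [lintegral_const, mul_comm]
  have h4 : ∫⁻ y : Set.Ioi (0:ℝ), f y ∂(Measure.volumeIoiPow (Module.finrank ℝ E - 1))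
      = ∫⁻ y in Set.Ioi (0:ℝ), ENNReal.ofReal (y ^ (Module.finrank ℝ E - 1)) * f y := by
    rw [Measure.volumeIoiPow,
      lintegral_withDensity_eq_lintegral_mul (g := fun y : Set.Ioi (0:ℝ) => f ↑y) _
        ((measurable_subtype_coe.pow_const _).ennreal_ofReal)
        (by exact hf.comp measurable_subtype_coe)]
    simp only [Pi.mul_apply]
    exact lintegral_subtype_comap measurableSet_Ioi
      (fun y => ENNReal.ofReal (y ^ (Module.finrank ℝ E - 1)) * f y)
  rw [h1, ← h4, ← h3, ← h2]
  exact lintegral_congr fun x => by simp [homeomorphUnitSphereProd]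

lemma Cns_pos (N : ℕ) {p s : ℝ} (hp : 1 < p) (hs0 : 0 < s) (hs1 : s < 1) :
    0 < Cns N s p := by
  have hp0 : (0:ℝ) < p := lt_trans one_pos hp
  have h1 : 0 < Real.Gamma (((N:ℝ) + s*p)/2) :=
    Real.Gamma_pos_of_pos (by positivity)
  have h2 : 0 < Real.Gamma (1-s) := Real.Gamma_pos_of_pos (by linarith)
  have h3 : 0 < Real.Gamma ((p+1)/2) := Real.Gamma_pos_of_pos (by linarith)
  unfold Cns
  split_ifs
  · exact div_pos (mul_pos (mul_pos (mul_pos hs0 hp0) (Real.rpow_pos_of_pos two_pos _)) h1)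
      (mul_pos (mul_pos (Real.rpow_pos_of_pos Real.pi_pos _) h2) h3)
  · exact div_pos (mul_pos (mul_pos (mul_pos hs0 hp0) (Real.rpow_pos_of_pos two_pos _)) h1)
      (mul_pos (Real.rpow_pos_of_pos Real.pi_pos _) h2)

lemma omegaN_eq (N : ℕ) (hN : 1 ≤ N) :
    (N:ℝ) * (Real.sqrt Real.pi ^ N / Real.Gamma ((N:ℝ)/2 + 1)) = omegaN N := by
  have hN0 : (0:ℝ) < N := by exact_mod_cast hN
  have hG : 0 < Real.Gamma ((N:ℝ)/2) := Real.Gamma_pos_of_pos (by positivity)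
  have hsqrt : Real.sqrt Real.pi ^ N = Real.pi ^ ((N:ℝ)/2) := by
    rw [Real.sqrt_eq_rpow, ← Real.rpow_natCast (Real.pi ^ ((1:ℝ)/2)) N,
      ← Real.rpow_mul Real.pi_pos.le]
    norm_num [div_eq_mul_inv, mul_comm]
  have hGa : Real.Gamma ((N:ℝ)/2 + 1) = ((N:ℝ)/2) * Real.Gamma ((N:ℝ)/2) :=
    Real.Gamma_add_one (by positivity)
  rw [omegaN, hsqrt, hGa]
  field_simp

lemma kernelK (N : ℕ) (hN : 1 ≤ N) {s p r : ℝ} (hs : 0 < s) (hp : 0 < p) (hr0 : 0 < r) :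
    ∫⁻ w : Rn N, (if r ≤ ‖w‖ then ENNReal.ofReal (‖w‖ ^ (-((N:ℝ) + s*p))) else 0)
      = ENNReal.ofReal (omegaN N / (s*p) * r ^ (-(s*p))) := by
  have : Nonempty (Fin N) := ⟨⟨0, hN⟩⟩
  have hnt : Nontrivial (Rn N) := by infer_instance
  have hsp : 0 < s * p := mul_pos hs hp
  set A : ℝ := (N:ℝ) + s*p with hA
  set f : ℝ → ℝ≥0∞ := fun t => if r ≤ t then ENNReal.ofReal (t ^ (-A)) else 0 with hf
  have hfm : Measurable f := by
    apply Measurable.ite (by exact measurableSet_Ici) _ measurable_const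
    fun_prop
  have hpolar := lintegral_fun_norm_polar (volume : Measure (Rn N)) f hfm
  have hrank : Module.finrank ℝ (Rn N) = N := by
    rw [finrank_euclideanSpace, Fintype.card_fin]
  rw [hrank] at hpolar
  have hinner : ∫⁻ y in Set.Ioi (0:ℝ), ENNReal.ofReal (y ^ (N - 1)) * f y
      = ENNReal.ofReal (r ^ (-(s*p)) / (s*p)) := by
    have hcongr : ∫⁻ y in Set.Ioi (0:ℝ), ENNReal.ofReal (y ^ (N - 1)) * f y
        = ∫⁻ y in Set.Ioi (0:ℝ),
            Set.indicator (Set.Ici r) (fun y => ENNReal.ofReal (y ^ (-1 - s*p))) y := by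
      apply setLIntegral_congr_fun measurableSet_Ioi
      intro y hy
      have hy0 : (0:ℝ) < y := hy
      by_cases hry : r ≤ y
      · rw [hf]
        simp only [if_pos hry, Set.indicator_of_mem (Set.mem_Ici.mpr hry)]
        rw [← ENNReal.ofReal_mul (by positivity)]
        congr 1
        rw [← Real.rpow_natCast y (N-1)]
        rw [← Real.rpow_add hy0]
        congr 1
        have : ((N - 1 : ℕ) : ℝ) = (N:ℝ) - 1 := by
          have := Nat.cast_sub hN (R := ℝ); simpa using this
        rw [this, hA]; ring
      · simp only [hf, if_neg hry, mul_zero]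
        rw [Set.indicator_of_notMem (by simp [Set.mem_Ici, hry])]
    have hset : Set.Ici r ∩ Set.Ioi 0 = Set.Ici r := by
      rw [Set.inter_eq_left]
      exact fun y hy => lt_of_lt_of_le hr0 hy
    rw [hcongr, lintegral_indicator measurableSet_Ici,
      Measure.restrict_restrict measurableSet_Ici, hset]
    have hint : MeasureTheory.IntegrableOn (fun y : ℝ => y ^ (-1 - s*p)) (Set.Ici r) := by
      rw [integrableOn_Ici_iff_integrableOn_Ioi]
      exact integrableOn_Ioi_rpow_of_lt (by linarith) hr0
    rw [← ofReal_integral_eq_lintegral_ofReal hint]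
    · congr 1
      rw [integral_Ici_eq_integral_Ioi, integral_Ioi_rpow_of_lt (by linarith) hr0]
      rw [show (-1 - s*p + 1 : ℝ) = -(s*p) by ring]
      rw [neg_div, div_neg, neg_neg]
    · filter_upwards [ae_restrict_mem measurableSet_Ici] with y hy
      exact Real.rpow_nonneg (le_trans hr0.le hy) _
  have hsphere : (volume : Measure (Rn N)).toSphere Set.univ
      = ENNReal.ofReal ((N:ℝ) * (Real.sqrt Real.pi ^ N / Real.Gamma ((N:ℝ)/2 + 1))) := by
    rw [Measure.toSphere_apply_univ, hrank, EuclideanSpace.volume_ball, Fintype.card_fin]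
    simp only [ENNReal.ofReal_one, one_pow, one_mul]
    rw [ENNReal.ofReal_mul (by positivity), ENNReal.ofReal_natCast]
  calc ∫⁻ w : Rn N, (if r ≤ ‖w‖ then ENNReal.ofReal (‖w‖ ^ (-A)) else 0)
      = ∫⁻ w : Rn N, f ‖w‖ := rfl
    _ = (volume : Measure (Rn N)).toSphere Set.univ *
          ∫⁻ y in Set.Ioi (0:ℝ), ENNReal.ofReal (y ^ (N - 1)) * f y := hpolar
    _ = ENNReal.ofReal ((N:ℝ) * (Real.sqrt Real.pi ^ N / Real.Gamma ((N:ℝ)/2 + 1)))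
          * ENNReal.ofReal (r ^ (-(s*p)) / (s*p)) := by rw [hsphere, hinner]
    _ = ENNReal.ofReal (omegaN N / (s*p) * r ^ (-(s*p))) := by
        rw [← ENNReal.ofReal_mul (by positivity)]
        congr 1
        rw [omegaN_eq N hN]
        field_simp

end Helpers

/-- **Statement 6.** For `u ∈ W_0^{s+log,p}(Ω)` and every `0 < r < 1`:
`[u]_{s,p}^p ≤ -(1/(C(N,s,p)·ln r))·[u]_{s+log,p}^p + (2^p ω_N/(sp))·r^{-sp}·‖u‖_{L^p(Ω)}^p`
(in particular `[u]_{s,p}^p` is finite). -/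
theorem statement6 (N : ℕ) (hN : 1 ≤ N) (p : ℝ) (hp : 1 < p) (s : ℝ)
    (hs : s ∈ Set.Ioo (0:ℝ) 1) (Ω : Set (Rn N)) (hΩo : IsOpen Ω)
    (hΩb : Bornology.IsBounded Ω) (hΩl : HasLipschitzBoundary Ω)
    (u : Rn N → ℝ) (hu : memW0 N s p Ω u) (r : ℝ) (hr0 : 0 < r) (hr1 : r < 1) :
    gagP N s p u ≤
      ENNReal.ofReal (-(1/(Cns N s p * Real.log r)) * (gagLogP N s p u).toReal +
        (2:ℝ) ^ p * omegaN N / (s*p) * r ^ (-(s*p)) * ∫ x in Ω, |u x| ^ p) := by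
  obtain ⟨⟨hmem, hfin⟩, hzero⟩ := hu
  have hs0 : 0 < s := hs.1
  have hs1 : s < 1 := hs.2
  have hp0 : (0:ℝ) < p := lt_trans one_pos hp
  have hsp : 0 < s * p := mul_pos hs0 hp0
  have hC : 0 < Cns N s p := Cns_pos N hp hs0 hs1
  have hlogr : Real.log r < 0 := Real.log_neg hr0 hr1
  set c₁ : ℝ := -(1/(Cns N s p * Real.log r)) with hc₁def
  have hc₁ : 0 ≤ c₁ := by
    rw [hc₁def, neg_nonneg]
    apply div_nonpos_of_nonneg_of_nonpos zero_le_one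
    exact (mul_neg_of_pos_of_neg hC hlogr).le
  -- measurable representative
  have hasm := hmem.aestronglyMeasurable
  set v : Rn N → ℝ := hasm.mk u with hvdef
  have hvm : Measurable v := hasm.stronglyMeasurable_mk.measurable
  have huv : u =ᵐ[(volume : Measure (Rn N))] v := hasm.ae_eq_mk
  have hq1 : (fun z : Rn N × Rn N => u z.1) =ᵐ[(volume : Measure (Rn N × Rn N))]
      (fun z => v z.1) := by
    exact (MeasureTheory.Measure.quasiMeasurePreserving_fst
      (μ := (volume : Measure (Rn N))) (ν := (volume : Measure (Rn N)))).ae_eq huv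
  have hq2 : (fun z : Rn N × Rn N => u z.2) =ᵐ[(volume : Measure (Rn N × Rn N))]
      (fun z => v z.2) := by
    exact (MeasureTheory.Measure.quasiMeasurePreserving_snd
      (μ := (volume : Measure (Rn N))) (ν := (volume : Measure (Rn N)))).ae_eq huv
  have hgagP : gagP N s p u = ∫⁻ z : Rn N × Rn N,
      ENNReal.ofReal (|v z.1 - v z.2| ^ p / ‖z.1 - z.2‖ ^ ((N:ℝ) + s*p)) := by
    rw [gagP]
    apply lintegral_congr_ae
    filter_upwards [hq1, hq2] with z e1 e2
    rw [e1, e2]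
  have hgagLog : gagLogP N s p u = ∫⁻ z : Rn N × Rn N,
      ENNReal.ofReal (|v z.1 - v z.2| ^ p * kplus N s p (z.1 - z.2)) := by
    rw [gagLogP]
    apply lintegral_congr_ae
    filter_upwards [hq1, hq2] with z e1 e2
    rw [e1, e2]
  set S : Set (Rn N × Rn N) := {z | ‖z.1 - z.2‖ < r} with hSdef
  have hSm : MeasurableSet S := by
    apply measurableSet_lt _ measurable_const
    exact (measurable_fst.sub measurable_snd).norm
  -- near part
  have hnear : (∫⁻ z in S, ENNReal.ofReal
        (|v z.1 - v z.2| ^ p / ‖z.1 - z.2‖ ^ ((N:ℝ) + s*p)))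
      ≤ ENNReal.ofReal (c₁ * (gagLogP N s p u).toReal) := by
    have hpt : ∀ z ∈ S, ENNReal.ofReal (|v z.1 - v z.2| ^ p / ‖z.1 - z.2‖ ^ ((N:ℝ) + s*p))
        ≤ ENNReal.ofReal c₁ *
          ENNReal.ofReal (|v z.1 - v z.2| ^ p * kplus N s p (z.1 - z.2)) := by
      intro z hz
      rw [hSdef] at hz
      have ht : ‖z.1 - z.2‖ < r := hz
      rw [← ENNReal.ofReal_mul hc₁]
      apply ENNReal.ofReal_le_ofReal
      rcases eq_or_lt_of_le (norm_nonneg (z.1 - z.2)) with h0 | h0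
      · have hz12 : z.1 = z.2 := by
          have h00 : ‖z.1 - z.2‖ = 0 := h0.symm
          rwa [norm_sub_eq_zero_iff] at h00
        rw [hz12, sub_self, abs_zero, Real.zero_rpow hp0.ne', zero_div, zero_mul, mul_zero]
      · have hlt : Real.log ‖z.1 - z.2‖ < Real.log r := Real.log_lt_log h0 ht
        have hnlr : 0 < -Real.log r := by linarith
        have htA : 0 < ‖z.1 - z.2‖ ^ ((N:ℝ) + s*p) := Real.rpow_pos_of_pos h0 _
        have hkp : kplus N s p (z.1 - z.2)
            = Cns N s p * (-Real.log ‖z.1 - z.2‖) / ‖z.1 - z.2‖ ^ ((N:ℝ) + s*p) := by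
          rw [kplus, max_eq_left (by linarith : (0:ℝ) ≤ -Real.log ‖z.1 - z.2‖)]
        have hd : 0 ≤ |v z.1 - v z.2| ^ p := Real.rpow_nonneg (abs_nonneg _) p
        calc |v z.1 - v z.2| ^ p / ‖z.1 - z.2‖ ^ ((N:ℝ) + s*p)
            ≤ (|v z.1 - v z.2| ^ p * ((-Real.log ‖z.1 - z.2‖)/(-Real.log r)))
                / ‖z.1 - z.2‖ ^ ((N:ℝ) + s*p) := by
              gcongr
              exact le_mul_of_one_le_right hd ((one_le_div hnlr).2 (by linarith))
          _ = c₁ * (|v z.1 - v z.2| ^ p * kplus N s p (z.1 - z.2)) := by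
              rw [hkp, hc₁def]
              field_simp [hC.ne', hlogr.ne, htA.ne']
    calc (∫⁻ z in S, ENNReal.ofReal
            (|v z.1 - v z.2| ^ p / ‖z.1 - z.2‖ ^ ((N:ℝ) + s*p)))
        ≤ ∫⁻ z in S, ENNReal.ofReal c₁ *
            ENNReal.ofReal (|v z.1 - v z.2| ^ p * kplus N s p (z.1 - z.2)) :=
          setLIntegral_mono' hSm hpt
      _ = ENNReal.ofReal c₁ * ∫⁻ z in S,
            ENNReal.ofReal (|v z.1 - v z.2| ^ p * kplus N s p (z.1 - z.2)) :=
          lintegral_const_mul' _ _ ENNReal.ofReal_ne_top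
      _ ≤ ENNReal.ofReal c₁ * gagLogP N s p u := by
          refine mul_le_mul_right ?_ _
          rw [hgagLog]
          exact setLIntegral_le_lintegral _ _
      _ = ENNReal.ofReal (c₁ * (gagLogP N s p u).toReal) := by
          rw [ENNReal.ofReal_mul hc₁, ENNReal.ofReal_toReal hfin.ne]
  -- far part
  set f₀ : ℝ → ℝ≥0∞ := fun t => if r ≤ t then ENNReal.ofReal (t ^ (-((N:ℝ)+s*p))) else 0
    with hf₀def
  have hf₀m : Measurable f₀ := by
    apply Measurable.ite (by exact measurableSet_Ici) _ measurable_const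
    fun_prop
  have hvp1 : Measurable fun x : Rn N => |v x| ^ p := by fun_prop
  have hTm1 : Measurable (fun z : Rn N × Rn N =>
      ENNReal.ofReal (|v z.1|^p) * f₀ ‖z.1 - z.2‖) := by
    exact ((hvp1.comp measurable_fst).ennreal_ofReal).mul
      (hf₀m.comp ((measurable_fst.sub measurable_snd).norm))
  have hΩnn : 0 ≤ ∫ x in Ω, |u x| ^ p :=
    integral_nonneg fun x => Real.rpow_nonneg (abs_nonneg _) _
  have hN0 : (0:ℝ) < N := by exact_mod_cast hN
  have hω : 0 ≤ omegaN N := by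
    apply div_nonneg _ (Real.Gamma_pos_of_pos (by positivity)).le
    positivity
  have hfar : (∫⁻ z in Sᶜ, ENNReal.ofReal
        (|v z.1 - v z.2| ^ p / ‖z.1 - z.2‖ ^ ((N:ℝ) + s*p)))
      ≤ ENNReal.ofReal ((2:ℝ)^p * omegaN N / (s*p) * r^(-(s*p)) * ∫ x in Ω, |u x|^p) := by
    have hL : ∫⁻ x : Rn N, ENNReal.ofReal (|v x| ^ p)
        = ENNReal.ofReal (∫ x in Ω, |u x| ^ p) := by
      have h1 : ∫⁻ x : Rn N, ENNReal.ofReal (|v x| ^ p)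
          = ∫⁻ x : Rn N, ENNReal.ofReal (|u x| ^ p) := by
        apply lintegral_congr_ae
        filter_upwards [huv] with x hx
        rw [hx]
      have hInt : Integrable (fun x : Rn N => |u x| ^ p) (volume : Measure (Rn N)) := by
        have h2 := hmem.integrable_norm_rpow (by simp [ENNReal.ofReal_eq_zero]; linarith)
          ENNReal.ofReal_ne_top
        simpa [Real.norm_eq_abs, ENNReal.toReal_ofReal hp0.le] using h2
      have h2 : ENNReal.ofReal (∫ x : Rn N, |u x| ^ p)
          = ∫⁻ x : Rn N, ENNReal.ofReal (|u x| ^ p) :=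
        ofReal_integral_eq_lintegral_ofReal hInt
          (Filter.Eventually.of_forall fun x => Real.rpow_nonneg (abs_nonneg _) p)
      have h3 : ∫ x in Ω, |u x| ^ p = ∫ x : Rn N, |u x| ^ p := by
        apply setIntegral_eq_integral_of_ae_compl_eq_zero
        filter_upwards [hzero] with x hx hxo
        rw [hx hxo, abs_zero, Real.zero_rpow hp0.ne']
      rw [h1, ← h2, h3]
    have hK := kernelK N hN hs0 hp0 hr0
    have hstepA : (∫⁻ z in Sᶜ, ENNReal.ofReal
          (|v z.1 - v z.2| ^ p / ‖z.1 - z.2‖ ^ ((N:ℝ) + s*p)))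
        = ∫⁻ z in Sᶜ, ENNReal.ofReal (|v z.1 - v z.2|^p) * f₀ ‖z.1 - z.2‖ := by
      apply setLIntegral_congr_fun hSm.compl
      intro z hz
      have hrt : r ≤ ‖z.1 - z.2‖ := by
        simp only [hSdef, Set.mem_compl_iff, Set.mem_setOf_eq, not_lt] at hz
        exact hz
      have ht0 : 0 < ‖z.1 - z.2‖ := lt_of_lt_of_le hr0 hrt
      rw [hf₀def]
      simp only [if_pos hrt]
      rw [← ENNReal.ofReal_mul (Real.rpow_nonneg (abs_nonneg _) p)]
      congr 1
      rw [Real.rpow_neg ht0.le, div_eq_mul_inv]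
    have hptb : ∀ z : Rn N × Rn N,
        ENNReal.ofReal (|v z.1 - v z.2|^p) * f₀ ‖z.1 - z.2‖ ≤
          (2:ℝ≥0∞)^(p-1) * ((ENNReal.ofReal (|v z.1|^p) + ENNReal.ofReal (|v z.2|^p))
            * f₀ ‖z.1 - z.2‖) := by
      intro z
      have hkey : ENNReal.ofReal (|v z.1 - v z.2|^p) ≤
          (2:ℝ≥0∞)^(p-1) * (ENNReal.ofReal (|v z.1|^p) + ENNReal.ofReal (|v z.2|^p)) := by
        rw [← ENNReal.ofReal_rpow_of_nonneg (abs_nonneg _) hp0.le,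
            ← ENNReal.ofReal_rpow_of_nonneg (abs_nonneg _) hp0.le,
            ← ENNReal.ofReal_rpow_of_nonneg (abs_nonneg _) hp0.le]
        calc (ENNReal.ofReal |v z.1 - v z.2|)^p
            ≤ (ENNReal.ofReal |v z.1| + ENNReal.ofReal |v z.2|)^p := by
              apply ENNReal.rpow_le_rpow _ hp0.le
              rw [← ENNReal.ofReal_add (abs_nonneg _) (abs_nonneg _)]
              exact ENNReal.ofReal_le_ofReal (abs_sub _ _)
          _ ≤ _ := ENNReal.rpow_add_le_mul_rpow_add_rpow _ _ hp.le
      simpa [mul_assoc] using mul_le_mul_left hkey (f₀ ‖z.1 - z.2‖)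
    have hswap : (∫⁻ z : Rn N × Rn N, ENNReal.ofReal (|v z.2|^p) * f₀ ‖z.1 - z.2‖)
        = ∫⁻ z : Rn N × Rn N, ENNReal.ofReal (|v z.1|^p) * f₀ ‖z.1 - z.2‖ := by
      have hmp := MeasureTheory.Measure.measurePreserving_swap
        (μ := (volume : Measure (Rn N))) (ν := (volume : Measure (Rn N)))
      have hcomp := hmp.lintegral_comp
        (f := fun z : Rn N × Rn N => ENNReal.ofReal (|v z.1|^p) * f₀ ‖z.2 - z.1‖)
        (((hvp1.comp measurable_fst).ennreal_ofReal).mul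
          (hf₀m.comp ((measurable_snd.sub measurable_fst).norm)))
      calc (∫⁻ z : Rn N × Rn N, ENNReal.ofReal (|v z.2|^p) * f₀ ‖z.1 - z.2‖)
          = ∫⁻ z : Rn N × Rn N, ENNReal.ofReal (|v z.1|^p) * f₀ ‖z.2 - z.1‖ := hcomp
        _ = _ := lintegral_congr fun z => by rw [norm_sub_rev]
    have hT : (∫⁻ z : Rn N × Rn N, ENNReal.ofReal (|v z.1|^p) * f₀ ‖z.1 - z.2‖)
        = ENNReal.ofReal (∫ x in Ω, |u x|^p)
          * ENNReal.ofReal (omegaN N / (s*p) * r^(-(s*p))) := by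
      rw [show (volume : Measure (Rn N × Rn N))
        = (volume : Measure (Rn N)).prod volume from rfl]
      rw [lintegral_prod _ hTm1.aemeasurable]
      have hinner : ∀ x : Rn N, (∫⁻ y : Rn N, ENNReal.ofReal (|v x|^p) * f₀ ‖x - y‖)
          = ENNReal.ofReal (|v x|^p) * ENNReal.ofReal (omegaN N / (s*p) * r^(-(s*p))) := by
        intro x
        rw [lintegral_const_mul' _ _ ENNReal.ofReal_ne_top]
        congr 1
        have h1 : (∫⁻ y : Rn N, f₀ ‖x - y‖) = ∫⁻ y : Rn N, f₀ ‖y - x‖ :=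
          lintegral_congr fun y => by rw [norm_sub_rev]
        rw [h1, lintegral_sub_right_eq_self (fun y => f₀ ‖y‖) x, hf₀def]
        exact hK
      simp_rw [hinner]
      rw [lintegral_mul_const'' _ (hvp1.ennreal_ofReal.aemeasurable), hL]
    have h2ne : ((2:ℝ≥0∞)^(p-1)) ≠ ⊤ :=
      ENNReal.rpow_ne_top_of_nonneg (by linarith) ENNReal.ofNat_ne_top
    have h2p : (2:ℝ≥0∞)^(p-1) * 2 = ENNReal.ofReal ((2:ℝ)^p) := by
      nth_rewrite 2 [show (2:ℝ≥0∞) = (2:ℝ≥0∞)^(1:ℝ) from (ENNReal.rpow_one 2).symm]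
      rw [← ENNReal.rpow_add _ _ two_ne_zero ENNReal.ofNat_ne_top, sub_add_cancel,
        ← ENNReal.ofReal_rpow_of_pos two_pos, ENNReal.ofReal_ofNat]
    calc (∫⁻ z in Sᶜ, ENNReal.ofReal
            (|v z.1 - v z.2| ^ p / ‖z.1 - z.2‖ ^ ((N:ℝ) + s*p)))
        = ∫⁻ z in Sᶜ, ENNReal.ofReal (|v z.1 - v z.2|^p) * f₀ ‖z.1 - z.2‖ := hstepA
      _ ≤ ∫⁻ z in Sᶜ, (2:ℝ≥0∞)^(p-1) *
            ((ENNReal.ofReal (|v z.1|^p) + ENNReal.ofReal (|v z.2|^p))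
              * f₀ ‖z.1 - z.2‖) :=
          setLIntegral_mono' hSm.compl (fun z _ => hptb z)
      _ ≤ ∫⁻ z : Rn N × Rn N, (2:ℝ≥0∞)^(p-1) *
            ((ENNReal.ofReal (|v z.1|^p) + ENNReal.ofReal (|v z.2|^p))
              * f₀ ‖z.1 - z.2‖) := setLIntegral_le_lintegral _ _
      _ = (2:ℝ≥0∞)^(p-1) * ((∫⁻ z : Rn N × Rn N,
              ENNReal.ofReal (|v z.1|^p) * f₀ ‖z.1 - z.2‖)
            + ∫⁻ z : Rn N × Rn N, ENNReal.ofReal (|v z.2|^p) * f₀ ‖z.1 - z.2‖) := by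
          rw [lintegral_const_mul' _ _ h2ne]
          congr 1
          simp_rw [add_mul]
          rw [lintegral_add_left hTm1]
      _ = (2:ℝ≥0∞)^(p-1) * 2 * ((∫⁻ z : Rn N × Rn N,
              ENNReal.ofReal (|v z.1|^p) * f₀ ‖z.1 - z.2‖)) := by
          rw [hswap, ← two_mul, ← mul_assoc]
      _ = ENNReal.ofReal ((2:ℝ)^p) * (ENNReal.ofReal (∫ x in Ω, |u x|^p)
            * ENNReal.ofReal (omegaN N / (s*p) * r^(-(s*p)))) := by
          rw [h2p, hT]
      _ = ENNReal.ofReal ((2:ℝ)^p * omegaN N / (s*p) * r^(-(s*p))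
            * ∫ x in Ω, |u x|^p) := by
          rw [← ENNReal.ofReal_mul hΩnn, ← ENNReal.ofReal_mul (by positivity)]
          congr 1
          field_simp
  -- combine
  have hb : 0 ≤ (2:ℝ)^p * omegaN N / (s*p) * r^(-(s*p)) * ∫ x in Ω, |u x|^p := by
    apply mul_nonneg _ hΩnn
    apply mul_nonneg _ (Real.rpow_nonneg hr0.le _)
    apply div_nonneg _ hsp.le
    exact mul_nonneg (Real.rpow_nonneg (by norm_num) _) hω
  have ha : 0 ≤ c₁ * (gagLogP N s p u).toReal :=
    mul_nonneg hc₁ ENNReal.toReal_nonneg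
  calc gagP N s p u
      = ∫⁻ z : Rn N × Rn N,
          ENNReal.ofReal (|v z.1 - v z.2| ^ p / ‖z.1 - z.2‖ ^ ((N:ℝ) + s*p)) := hgagP
    _ = (∫⁻ z in S, ENNReal.ofReal
            (|v z.1 - v z.2| ^ p / ‖z.1 - z.2‖ ^ ((N:ℝ) + s*p)))
        + ∫⁻ z in Sᶜ, ENNReal.ofReal
            (|v z.1 - v z.2| ^ p / ‖z.1 - z.2‖ ^ ((N:ℝ) + s*p)) :=
        (lintegral_add_compl _ hSm).symm
    _ ≤ ENNReal.ofReal (c₁ * (gagLogP N s p u).toReal)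
        + ENNReal.ofReal ((2:ℝ)^p * omegaN N / (s*p) * r^(-(s*p)) * ∫ x in Ω, |u x|^p) :=
        add_le_add hnear hfar
    _ = ENNReal.ofReal (c₁ * (gagLogP N s p u).toReal
          + (2:ℝ)^p * omegaN N / (s*p) * r^(-(s*p)) * ∫ x in Ω, |u x|^p) :=
        (ENNReal.ofReal_add ha hb).symm


end
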